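/- For t ≥ 0 and any x, θ ∈ ℝ, the error of soft-thresholding satisfies |η_t(x) - θ|² ≤ 3(|x - θ|² + min{t², θ²}). -/
import Mathlib


/-- Soft-thresholding shrinker `η_t(x) = (|x| - t)₊ · sgn(x)`. -/
noncomputable def softThresh (t x : ℝ) : ℝ := max (|x| - t) 0 * Real.sign x

lemma softThresh_abs (t x : ℝ) (ht : 0 ≤ t) : |softThresh t x| = max (|x| - t) 0 := by
  unfold softThresh
  rcases lt_trichotomy x 0 with h | h | h
  · rw [Real.sign_of_neg h]
    rw [abs_mul, abs_of_nonneg (le_max_right _ _)]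
    simp
  · subst h
    simp only [Real.sign_zero, mul_zero, abs_zero, abs_zero, zero_sub]
    rw [max_eq_right (by linarith : -t ≤ 0)]
  · rw [Real.sign_of_pos h]
    rw [abs_mul, abs_of_nonneg (le_max_right _ _)]
    simp

lemma softThresh_dist (t x : ℝ) (ht : 0 ≤ t) : |softThresh t x - x| ≤ t := by
  unfold softThresh
  rcases lt_trichotomy x 0 with h | h | h
  · rw [Real.sign_of_neg h, abs_of_neg h]
    rcases le_total (-x - t) 0 with h' | h'
    · rw [max_eq_right h', abs_of_nonneg (by linarith)]; linarith
    · rw [max_eq_left h']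
      rw [abs_le]; constructor <;> nlinarith
  · subst h; simpa using ht
  · rw [Real.sign_of_pos h, abs_of_pos h]
    rcases le_total (x - t) 0 with h' | h'
    · rw [max_eq_right h', abs_of_nonpos (by linarith)]; linarith
    · rw [max_eq_left h']
      rw [abs_le]; constructor <;> nlinarith

theorem softThresh_squared_error_bound (t : ℝ) (ht : 0 ≤ t) (x θ : ℝ) :
    (softThresh t x - θ) ^ 2 ≤ 3 * ((x - θ) ^ 2 + min (t ^ 2) (θ ^ 2)) := by
  have key : |softThresh t x - θ| ≤ |x - θ| + min t |θ| := by
    rcases le_total t |θ| with h | h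
    · rw [min_eq_left h]
      calc |softThresh t x - θ| ≤ |softThresh t x - x| + |x - θ| := abs_sub_le _ _ _
        _ ≤ t + |x - θ| := by linarith [softThresh_dist t x ht]
        _ = |x - θ| + t := by ring
    · rw [min_eq_right h]
      have hb : |softThresh t x| ≤ |x - θ| := by
        rw [softThresh_abs t x ht]
        apply max_le
        · have := abs_sub_abs_le_abs_sub x θ; linarith
        · exact abs_nonneg _
      calc |softThresh t x - θ| ≤ |softThresh t x| + |θ| := by
            rw [sub_eq_add_neg]
            exact (abs_add_le _ _).trans (by rw [abs_neg])
        _ ≤ |x - θ| + |θ| := by linarith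
  have hm : (min t |θ|) ^ 2 = min (t ^ 2) (θ ^ 2) := by
    rcases le_total t |θ| with h | h
    · rw [min_eq_left h, min_eq_left]
      calc t ^ 2 ≤ |θ| ^ 2 := by nlinarith [abs_nonneg θ]
        _ = θ ^ 2 := sq_abs θ
    · rw [min_eq_right h, min_eq_right, ← sq_abs θ]
      nlinarith [abs_nonneg θ, sq_abs θ]
  have h2 : (softThresh t x - θ) ^ 2 ≤ (|x - θ| + min t |θ|) ^ 2 := by
    rw [← sq_abs]
    exact pow_le_pow_left₀ (abs_nonneg _) key 2
  nlinarith [sq_nonneg (|x - θ| - min t |θ|), hm, sq_nonneg (|x - θ|), sq_abs (x - θ)]
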